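/- Let H be a subgroup of a finite group G. Then Pr(H, Aut(G)) ≥ (1/|S(H, Aut(G))|)·(1 + (|S(H, Aut(G))| − 1)/[H : L(H, Aut(G))]), and equality holds if and only if orb(x) = x·S(H, Aut(G)) for every x ∈ H \ L(H, Aut(G)). -/

import Mathlib

open scoped Classical

variable {G : Type*}

/-- The relative autocommutativity degree `Pr(H, Aut(G))`: the probability that a randomly
chosen automorphism of `G` fixes a randomly chosen element of the subgroup `H`. -/
noncomputable def autPr [Group G] (H : Subgroup G) : ℚ :=
  (Nat.card {p : H × MulAut G // p.2 (p.1 : G) = (p.1 : G)} : ℚ) /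
    ((Nat.card H : ℚ) * (Nat.card (MulAut G) : ℚ))

/-- `L(H, Aut(G))`, the subgroup of elements of `H` fixed by every automorphism of `G`. -/
def autFix [Group G] (H : Subgroup G) : Subgroup G where
  carrier := {x | x ∈ H ∧ ∀ α : MulAut G, α x = x}
  one_mem' := ⟨H.one_mem, fun α => map_one α⟩
  mul_mem' := fun ha hb => ⟨H.mul_mem ha.1 hb.1, fun α => by
    rw [map_mul, ha.2 α, hb.2 α]⟩
  inv_mem' := fun ha => ⟨H.inv_mem ha.1, fun α => by rw [map_inv, ha.2 α]⟩

instance autFix_normal [Group G] (H : Subgroup G) : ((autFix H).subgroupOf H).Normal := by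
  constructor
  intro n hn g
  rw [Subgroup.mem_subgroupOf] at hn ⊢
  obtain ⟨-, hfix⟩ := hn
  have hcen : ∀ c : G, c * (n : G) = (n : G) * c := by
    intro c
    have h := hfix (MulAut.conj c)
    simp only [MulAut.conj_apply] at h
    exact mul_inv_eq_iff_eq_mul.mp h
  have hconj : ∀ c : G, c * (n : G) * c⁻¹ = (n : G) := by
    intro c
    rw [hcen c, mul_inv_cancel_right]
  refine ⟨(g * n * g⁻¹).2, fun α => ?_⟩
  push_cast
  rw [map_mul, map_mul, map_inv, hfix α, hconj (α g), hconj (g : G)]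

/-- `X_H`: the set of elements of `H` whose centralizer in `Aut(G)` is trivial, i.e. the only
automorphism fixing them is the identity. -/
def autX [Group G] (H : Subgroup G) : Set H :=
  {x | ∀ α : MulAut G, α (x : G) = x → α = 1}

/-- `S(H, Aut(G))`: the set of autocommutators `[x, α] = x⁻¹ α(x)` with `x ∈ H`, `α ∈ Aut(G)`. -/
def autS [Group G] (H : Subgroup G) : Set G :=
  {g | ∃ x ∈ H, ∃ α : MulAut G, g = x⁻¹ * α x}

/-- Every autocommutator `x⁻¹ α(x)` with `x ∈ H` lies in `[H, Aut(G)] = ⟨S(H, Aut(G))⟩`. -/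
lemma autcomm_mem_closure [Group G] (H : Subgroup G) (x : H) (α : MulAut G) :
    (x : G)⁻¹ * α x ∈ Subgroup.closure (autS H) :=
  Subgroup.subset_closure ⟨x, x.2, α, rfl⟩

/-!
By orbit–stabilizer, `Pr(H, Aut(G))` is the average over `x ∈ H` of `1 / |orb(x)|`. Since
`α(x) = x·[x, α]`, the orbit of `x ∈ H` lies in `x·S(H, Aut(G))`, so each term is at least `1 / |S|`,
with equality exactly when `orb(x) = x·S`; the terms with `x ∈ L` equal `1`. Averaging this
pointwise bound over `H`, a fraction `1 / [H : L]` of whose elements lie in `L`, gives the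
inequality, and equality holds iff the bound is attained at every `x ∈ H \ L`.
-/

open MulAction

section FixedPairs

variable {A X ι : Type*} [Group A] [MulAction A X]

theorem card_fixedPairs_eq_sum_card_stabilizer [Fintype ι] [Finite A] (f : ι → X) :
    Nat.card {p : ι × A // p.2 • f p.1 = f p.1} = ∑ i, Nat.card (stabilizer A (f i)) := by
  rw [Nat.card_congr (Equiv.subtypeProdEquivSigmaSubtype fun i (a : A) => a • f i = f i),
    Nat.card_sigma]
  rfl

theorem card_stabilizer_div_card_eq_inv_card_orbit [Finite A] (x : X) :
    (Nat.card (stabilizer A x) : ℚ) / Nat.card A = (Nat.card (orbit A x) : ℚ)⁻¹ := by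
  have hpos : 0 < Nat.card (stabilizer A x) := Nat.card_pos
  rw [← (stabilizer A x).card_mul_index, index_stabilizer, Nat.card_coe_set_eq]
  push_cast
  field_simp

end FixedPairs

theorem Subgroup.card_mul_relIndex {G : Type*} [Group G] {K H : Subgroup G} (hKH : K ≤ H) :
    Nat.card K * K.relIndex H = Nat.card H := by
  rw [← relIndex_bot_left, ← relIndex_bot_left]
  exact relIndex_mul_relIndex ⊥ K H bot_le hKH

section Autocommutators

variable [Group G] (H : Subgroup G)

theorem autFix_le : autFix H ≤ H := fun _ hx => hx.1

theorem one_mem_autS : (1 : G) ∈ autS H := ⟨1, H.one_mem, 1, by simp⟩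

theorem autPr_eq_sum_inv_card_orbit [Fintype G] :
    autPr H = (∑ x : H, (Nat.card (orbit (MulAut G) (x : G)) : ℚ)⁻¹) / Nat.card H := by
  simp_rw [← card_stabilizer_div_card_eq_inv_card_orbit, ← Finset.sum_div, ← Nat.cast_sum,
    ← card_fixedPairs_eq_sum_card_stabilizer (A := MulAut G) (fun x : H => (x : G))]
  rw [autPr, div_div, mul_comm]
  rfl

theorem card_orbit_eq_one_of_mem_autFix {x : G} (hx : x ∈ autFix H) :
    Nat.card (orbit (MulAut G) x) = 1 := by
  have : orbit (MulAut G) x = {x} := Set.eq_singleton_iff_unique_mem.2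
    ⟨mem_orbit_self x, by rintro _ ⟨α, rfl⟩; exact hx.2 α⟩
  rw [this, Nat.card_unique]

theorem orbit_subset_mul_autS {x : G} (hx : x ∈ H) :
    orbit (MulAut G) x ⊆ (fun s => x * s) '' autS H := by
  rintro _ ⟨α, rfl⟩
  exact ⟨x⁻¹ * α x, ⟨x, hx, α, rfl⟩, mul_inv_cancel_left x _⟩

theorem card_mul_autS (x : G) : Nat.card ((fun s => x * s) '' autS H) = Nat.card (autS H) :=
  Nat.card_image_of_injective (mul_right_injective x) _

variable [Fintype G]

theorem card_orbit_le_card_autS {x : G} (hx : x ∈ H) :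
    Nat.card (orbit (MulAut G) x) ≤ Nat.card (autS H) :=
  card_mul_autS H x ▸ Nat.card_mono (Set.toFinite _) (orbit_subset_mul_autS H hx)

theorem orbit_eq_mul_autS_iff {x : G} (hx : x ∈ H) :
    orbit (MulAut G) x = (fun s => x * s) '' autS H ↔
      Nat.card (orbit (MulAut G) x) = Nat.card (autS H) := by
  refine ⟨fun h => h ▸ card_mul_autS H x, fun h => ?_⟩
  refine Set.eq_of_subset_of_ncard_le (orbit_subset_mul_autS H hx) ?_ (Set.toFinite _)
  rw [← Nat.card_coe_set_eq, ← Nat.card_coe_set_eq, card_mul_autS, h]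

theorem inv_card_autS_le_inv_card_orbit {x : G} (hx : x ∈ H) :
    (Nat.card (autS H) : ℚ)⁻¹ ≤ (Nat.card (orbit (MulAut G) x) : ℚ)⁻¹ := by
  have : Nonempty (orbit (MulAut G) x) := (nonempty_orbit x).to_subtype
  have : 0 < Nat.card (orbit (MulAut G) x) := Nat.card_pos
  gcongr
  exact card_orbit_le_card_autS H hx

theorem card_filter_mem_autFix :
    (Finset.univ.filter fun x : H => (x : G) ∈ autFix H).card = Nat.card (autFix H) := by
  rw [← Fintype.card_subtype, ← Nat.card_eq_fintype_card]
  exact Nat.card_congr (Subgroup.subgroupOfEquivOfLe (autFix_le H)).toEquiv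

theorem sum_ite_mem_autFix_div_card :
    (∑ x : H, if (x : G) ∈ autFix H then 1 else (Nat.card (autS H) : ℚ)⁻¹) / Nat.card H =
      (1 / (Nat.card (autS H) : ℚ)) *
        (1 + ((Nat.card (autS H) : ℚ) - 1) / ((autFix H).relIndex H : ℚ)) := by
  have : Nonempty (autS H) := ⟨⟨1, one_mem_autS H⟩⟩
  have hS : 0 < Nat.card (autS H) := Nat.card_pos
  have hL : 0 < Nat.card (autFix H) := Nat.card_pos
  have hcard_fix := card_filter_mem_autFix H
  have hcard_split := Finset.card_filter_add_card_filter_not (s := Finset.univ)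
    (fun x : H => (x : G) ∈ autFix H)
  rw [Finset.card_univ, ← Nat.card_eq_fintype_card, hcard_fix,
    ← Subgroup.card_mul_relIndex (autFix_le H)] at hcard_split
  have hR : (autFix H).relIndex H ≠ 0 := by
    intro h0
    rw [h0, mul_zero] at hcard_split
    omega
  rw [Finset.sum_ite, Finset.sum_const, Finset.sum_const, hcard_fix, nsmul_eq_mul, nsmul_eq_mul,
    ← Subgroup.card_mul_relIndex (autFix_le H)]
  have hcard_nonfix := congrArg (Nat.cast (R := ℚ)) hcard_split
  push_cast at hcard_nonfix ⊢
  rw [← eq_sub_iff_add_eq'] at hcard_nonfix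
  rw [hcard_nonfix]
  field_simp
  ring

theorem ite_mem_autFix_le_inv_card_orbit (x : H) :
    (if (x : G) ∈ autFix H then 1 else (Nat.card (autS H) : ℚ)⁻¹) ≤
      (Nat.card (orbit (MulAut G) (x : G)) : ℚ)⁻¹ := by
  split_ifs with hx
  · rw [card_orbit_eq_one_of_mem_autFix H hx, Nat.cast_one, inv_one]
  · exact inv_card_autS_le_inv_card_orbit H x.2

theorem ite_mem_autFix_eq_inv_card_orbit_iff (x : H) :
    (if (x : G) ∈ autFix H then 1 else (Nat.card (autS H) : ℚ)⁻¹) =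
        (Nat.card (orbit (MulAut G) (x : G)) : ℚ)⁻¹ ↔
      ((x : G) ∉ autFix H →
        orbit (MulAut G) (x : G) = (fun s => (x : G) * s) '' autS H) := by
  split_ifs with hx
  · rw [card_orbit_eq_one_of_mem_autFix H hx, Nat.cast_one, inv_one]
    exact iff_of_true rfl (absurd hx)
  · rw [inv_inj, Nat.cast_inj, eq_comm, orbit_eq_mul_autS_iff H x.2]
    exact ⟨fun h _ => h, fun h => h hx⟩

end Autocommutators

theorem stmt17_general [Group G] [Fintype G] (H : Subgroup G) :
    autPr H ≥
      (1 / (Nat.card (autS H) : ℚ)) *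
        (1 + ((Nat.card (autS H) : ℚ) - 1) / ((autFix H).relIndex H : ℚ))
    ∧ (autPr H =
        (1 / (Nat.card (autS H) : ℚ)) *
          (1 + ((Nat.card (autS H) : ℚ) - 1) / ((autFix H).relIndex H : ℚ))
      ↔ ∀ x ∈ H, x ∉ autFix H →
          MulAction.orbit (MulAut G) x = (fun s => x * s) '' autS H) := by
  have hH : (0 : ℚ) < Nat.card H := Nat.cast_pos.2 Nat.card_pos
  have hle := fun x (_ : x ∈ Finset.univ) => ite_mem_autFix_le_inv_card_orbit H x
  rw [autPr_eq_sum_inv_card_orbit, ← sum_ite_mem_autFix_div_card]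
  refine ⟨div_le_div_of_nonneg_right (Finset.sum_le_sum hle) hH.le, ?_⟩
  rw [div_left_inj' hH.ne', eq_comm, Finset.sum_eq_sum_iff_of_le hle]
  simp only [Finset.mem_univ, true_implies, ite_mem_autFix_eq_inv_card_orbit_iff, Subtype.forall]

theorem stmt17 [Group G] [Fintype G] [DecidableEq G] (H : Subgroup G) :
    autPr H ≥
      (1 / (Nat.card (autS H) : ℚ)) *
        (1 + ((Nat.card (autS H) : ℚ) - 1) / ((autFix H).relIndex H : ℚ))
    ∧ (autPr H =
        (1 / (Nat.card (autS H) : ℚ)) *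
          (1 + ((Nat.card (autS H) : ℚ) - 1) / ((autFix H).relIndex H : ℚ))
      ↔ ∀ x ∈ H, x ∉ autFix H →
          MulAction.orbit (MulAut G) x = (fun s => x * s) '' autS H) :=
  stmt17_general H
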